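/- Let G be a finite nonabelian simple group acting faithfully and primitively on a finite set Ω, such that every automorphism of G is inner (Out(G) = 1) and the image G^Ω of G is a maximal subgroup of the alternating group Alt(Ω). If, for some integer k with 1 ≤ k < |Ω| − 2, the action of G on Ω is k-transitive but not (k+1)-transitive, then (G^Ω)^{(k+1),Ω} = G^Ω while (G^Ω)^{(k),Ω} ≠ G^Ω. -/

import Mathlib

open Pointwise

/-- The `k`-closure of a set `S` of permutations of `Ω`. -/
def kClosure {Ω : Type*} (S : Set (Equiv.Perm Ω)) (k : ℕ) : Set (Equiv.Perm Ω) :=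
  {g | ∀ f : Fin k → Ω, ∃ h ∈ S, ∀ i, g (f i) = h (f i)}

/-!
By `k`-transitivity the `k`-closure of `G^Ω` is all of `Sym(Ω)`, which is not contained in
`Alt(Ω)`. The `(k+1)`-closure `H` is a group containing `G^Ω`; it cannot contain `Alt(Ω)`,
which is `(k+1)`-transitive because `k + 1 ≤ |Ω| - 2`, while `G` is not. Maximality then gives
`H ⊓ Alt(Ω) = G^Ω`, so `H` normalises `G^Ω`.

A nonabelian primitive group has trivial centraliser in `Sym(Ω)`: if `c` centralises `G^Ω`
and `g • a = c a`, then `g` normalises `G_a`. The orbit of `N_G(G_a)` through `a` is a block;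
if it is `{a}`, then `c` fixes `a`, hence every point; if it is `Ω`, then `G_a` fixes every
point, so `G` is regular, and a regular primitive group is cyclic. With `Out(G) = 1` this
makes `G^Ω` self-normalising, so `H = G^Ω`.
-/

open Equiv MulAction Subgroup

theorem MonoidHom.exists_mul_mem_centralizer_of_mem_normalizer {G P : Type*} [Group G] [Group P]
    {π : G →* P} (hπ : Function.Injective π)
    (hinner : ∀ f : G ≃* G, ∃ g : G, ∀ x : G, f x = g * x * g⁻¹) {τ : P}
    (hτ : τ ∈ normalizer (π.range : Set P)) :
    ∃ g : G, (π g)⁻¹ * τ ∈ centralizer (π.range : Set P) := by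
  let e := MonoidHom.ofInjective hπ
  let conjτ : π.range ≃* π.range :=
    ((MulAut.conj τ).subgroupMap π.range).trans
      (MulEquiv.subgroupCongr (mem_normalizer_iff_map_conj_eq.mp hτ))
  obtain ⟨g, hg⟩ := hinner (e.trans (conjτ.trans e.symm))
  refine ⟨g, mem_centralizer_iff.mpr ?_⟩
  rintro _ ⟨x, rfl⟩
  have hconj : τ * π x * τ⁻¹ = π g * π x * (π g)⁻¹ := by
    simpa [e, conjτ, MonoidHom.ofInjective_apply] using congrArg π (hg x)
  calc π x * ((π g)⁻¹ * τ) = (π g)⁻¹ * (π g * π x * (π g)⁻¹) * τ := by group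
    _ = (π g)⁻¹ * τ * π x := by rw [← hconj]; group

namespace MulAction

variable {G X : Type*} [Group G] [MulAction G X]

theorem IsPreprimitive.le_stabilizer_or_orbit_eq_univ [IsPreprimitive G X] {H : Subgroup G}
    {a : X} (hH : stabilizer G a ≤ H) : H ≤ stabilizer G a ∨ orbit H a = Set.univ := by
  refine (isTrivialBlock_of_isBlock (IsBlock.of_orbit hH)).imp (fun hsub h hh => ?_) id
  exact hsub (mem_orbit a (⟨h, hh⟩ : H)) (mem_orbit_self a)

theorem IsPreprimitive.commute_of_stabilizer_eq_bot [IsPreprimitive G X] {a : X}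
    (ha : stabilizer G a = ⊥) (x y : G) : Commute x y := by
  by_cases hx : x = 1
  · simp [hx]
  have hyx : y ∈ zpowers x := by
    obtain hle | huniv := le_stabilizer_or_orbit_eq_univ (H := zpowers x) (ha ▸ bot_le)
    · exact absurd (by simpa [ha] using hle (mem_zpowers x)) hx
    · obtain ⟨⟨z, hz⟩, hza⟩ := huniv ▸ Set.mem_univ (y • a)
      have : z⁻¹ * y ∈ stabilizer G a := by
        simp [mem_stabilizer_iff, mul_smul, ← hza]
      rw [ha, mem_bot, inv_mul_eq_one] at this
      exact this ▸ hz
  obtain ⟨n, rfl⟩ := mem_zpowers_iff.mp hyx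
  exact Commute.self_zpow x n

theorem stabilizer_eq_bot_of_orbit_normalizer_eq_univ [FaithfulSMul G X] {a : X}
    (ha : orbit (normalizer (stabilizer G a : Set G)) a = Set.univ) : stabilizer G a = ⊥ := by
  refine (eq_bot_iff_forall _).mpr fun h hh => eq_of_smul_eq_smul (α := X) fun y => ?_
  obtain ⟨⟨n, hn⟩, rfl⟩ := ha ▸ Set.mem_univ y
  have hstab : stabilizer G (n • a) = stabilizer G a := by
    rw [stabilizer_smul_eq_stabilizer_map_conj, MulEquiv.toMonoidHom_eq_coe]
    exact mem_normalizer_iff_map_conj_eq.mp hn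
  rw [one_smul, ← mem_stabilizer_iff]
  exact hstab.ge hh

theorem IsPreprimitive.centralizer_range_toPermHom_eq_bot [FaithfulSMul G X]
    [IsPreprimitive G X] (hG : ∃ x y : G, ¬Commute x y) :
    centralizer ((toPermHom G X).range : Set (Perm X)) = ⊥ := by
  refine (eq_bot_iff_forall _).mpr fun c hc => Equiv.ext fun a => ?_
  have hc' : ∀ (g : G) (x : X), c (g • x) = g • c x := fun g x =>
    (congrArg (· x) (mem_centralizer_iff.mp hc _ ⟨g, rfl⟩)).symm
  obtain ⟨g, hg⟩ := exists_smul_eq G a (c a)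
  have hgN : g ∈ normalizer (stabilizer G a : Set G) := by
    rw [mem_normalizer_iff_map_conj_eq, ← MulEquiv.toMonoidHom_eq_coe,
      ← stabilizer_smul_eq_stabilizer_map_conj, hg]
    ext h
    simp only [mem_stabilizer_iff, ← hc', c.injective.eq_iff]
  obtain hle | huniv := le_stabilizer_or_orbit_eq_univ (le_normalizer (H := stabilizer G a))
  · rw [← hg, hle hgN]; rfl
  · obtain ⟨x, y, hxy⟩ := hG
    exact absurd (commute_of_stabilizer_eq_bot
      (stabilizer_eq_bot_of_orbit_normalizer_eq_univ huniv) x y) hxy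

theorem IsPreprimitive.normalizer_range_toPermHom_le [FaithfulSMul G X] [IsPreprimitive G X]
    (hG : ∃ x y : G, ¬Commute x y)
    (hinner : ∀ f : G ≃* G, ∃ g : G, ∀ x : G, f x = g * x * g⁻¹) :
    normalizer ((toPermHom G X).range : Set (Perm X)) ≤ (toPermHom G X).range := by
  intro τ hτ
  obtain ⟨g, hg⟩ := MonoidHom.exists_mul_mem_centralizer_of_mem_normalizer
    toPerm_injective hinner hτ
  rw [centralizer_range_toPermHom_eq_bot hG, mem_bot, inv_mul_eq_one] at hg
  exact ⟨g, hg⟩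

end MulAction

theorem alternatingGroup.isMultiplyPretransitive_of_le {α : Type*} [Fintype α] [DecidableEq α]
    {m : ℕ} (hm : m ≤ Nat.card α - 2) : IsMultiplyPretransitive (alternatingGroup α) α m :=
  have := alternatingGroup.isMultiplyPretransitive α
  MulAction.isMultiplyPretransitive_of_le hm (Nat.sub_le _ 2)

theorem Subgroup.coe_ne_univ_of_le_alternatingGroup {α : Type*} [Fintype α] [DecidableEq α]
    [Nontrivial α] {H : Subgroup (Perm α)} (hH : H ≤ alternatingGroup α) :
    (H : Set (Perm α)) ≠ Set.univ := by
  intro hH_univ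
  have hAlt_top : alternatingGroup α = ⊤ :=
    top_le_iff.mp fun σ _ => hH (hH_univ.ge (Set.mem_univ σ))
  simpa [hAlt_top] using alternatingGroup.index_eq_two (α := α)

theorem exists_embedding_fin_range_superset {Ω : Type*} [Finite Ω] {k : ℕ}
    (hk : k ≤ Nat.card Ω) (f : Fin k → Ω) :
    ∃ e : Fin k ↪ Ω, Set.range f ⊆ Set.range e := by
  classical
  have := Fintype.ofFinite Ω
  obtain ⟨t, hft, -, htk⟩ := Finset.exists_subsuperset_card_eq (s := Finset.univ.image f)
    (Finset.subset_univ _) (Finset.card_image_le.trans_eq (Finset.card_fin k))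
    (by simpa using hk)
  let eqv : t ≃ Fin k := t.equivFin.trans (finCongr htk)
  refine ⟨eqv.symm.toEmbedding.trans (Function.Embedding.subtype _), ?_⟩
  rintro _ ⟨i, rfl⟩
  have hi : f i ∈ t := hft (Finset.mem_image_of_mem f (Finset.mem_univ i))
  exact ⟨eqv ⟨f i, hi⟩, by simp⟩

section kClosure

variable {G Ω : Type*} [Group G] [MulAction G Ω]

theorem subset_kClosure (S : Set (Perm Ω)) (k : ℕ) : S ⊆ kClosure S k :=
  fun g hg _ => ⟨g, hg, fun _ => rfl⟩

def kClosureSubgroup (H : Subgroup (Perm Ω)) (k : ℕ) : Subgroup (Perm Ω) where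
  carrier := kClosure H k
  one_mem' := subset_kClosure _ k H.one_mem
  mul_mem' {a b} ha hb f := by
    obtain ⟨b', hb'H, hbf⟩ := hb f
    obtain ⟨a', ha'H, haf⟩ := ha (fun i => b (f i))
    refine ⟨a' * b', H.mul_mem ha'H hb'H, fun i => ?_⟩
    rw [Perm.mul_apply, Perm.mul_apply, ← hbf]
    exact haf i
  inv_mem' {a} ha f := by
    obtain ⟨h, hH, haf⟩ := ha (fun i => a⁻¹ (f i))
    refine ⟨h⁻¹, H.inv_mem hH, fun i => ?_⟩
    rw [eq_comm, Perm.inv_eq_iff_eq, ← haf]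
    simp

theorem le_kClosureSubgroup (H : Subgroup (Perm Ω)) (k : ℕ) : H ≤ kClosureSubgroup H k :=
  subset_kClosure _ k

theorem kClosure_range_toPermHom_eq_univ [Finite Ω] {k : ℕ} [IsMultiplyPretransitive G Ω k]
    (hk : k ≤ Nat.card Ω) : kClosure ((toPermHom G Ω).range : Set (Perm Ω)) k = Set.univ := by
  refine Set.eq_univ_of_forall fun σ f => ?_
  obtain ⟨e, hfe⟩ := exists_embedding_fin_range_superset hk f
  obtain ⟨g, hg⟩ := exists_smul_eq G e (e.trans σ.toEmbedding)
  refine ⟨toPermHom G Ω g, ⟨g, rfl⟩, fun i => ?_⟩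
  obtain ⟨j, hj⟩ := hfe ⟨i, rfl⟩
  rw [← hj]
  exact (congrArg (· j) hg).symm

theorem isMultiplyPretransitive_of_subset_kClosure {K : Subgroup (Perm Ω)} {k : ℕ}
    [IsMultiplyPretransitive K Ω k]
    (hK : (K : Set (Perm Ω)) ⊆ kClosure ((toPermHom G Ω).range : Set (Perm Ω)) k) :
    IsMultiplyPretransitive G Ω k := by
  refine isMultiplyPretransitive_iff.mpr fun x y => ?_
  obtain ⟨σ, rfl⟩ := exists_smul_eq K x y
  obtain ⟨_, ⟨g, rfl⟩, hg⟩ := hK σ.2 x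
  exact ⟨g, Function.Embedding.ext fun i => (hg i).symm⟩

end kClosure

theorem kClosure_of_maximal_in_alternating_general {G : Type*} [Group G]
    (hnonab : ∃ a b : G, a * b ≠ b * a)
    {Ω : Type*} [Fintype Ω] [DecidableEq Ω] [MulAction G Ω] [FaithfulSMul G Ω]
    (htrans : ∀ x y : Ω, ∃ g : G, g • x = y)
    (hprim : ∀ B : Set Ω, (∀ g : G, g • B = B ∨ Disjoint (g • B) B) →
      B.Subsingleton ∨ B = Set.univ)
    (hinner : ∀ f : G ≃* G, ∃ g : G, ∀ x : G, f x = g * x * g⁻¹)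
    (hle : (MulAction.toPermHom G Ω).range ≤ alternatingGroup Ω)
    (hmax : ∀ H : Subgroup (Equiv.Perm Ω), (MulAction.toPermHom G Ω).range ≤ H →
      H ≤ alternatingGroup Ω →
      H = (MulAction.toPermHom G Ω).range ∨ H = alternatingGroup Ω)
    (k : ℕ) (hk2 : k < Fintype.card Ω - 2)
    (hktrans : ∀ x y : Fin k ↪ Ω, ∃ g : G, ∀ i, g • x i = y i)
    (hnotktrans : ¬ ∀ x y : Fin (k + 1) ↪ Ω, ∃ g : G, ∀ i, g • x i = y i) :
    kClosure ((MulAction.toPermHom G Ω).range : Set (Equiv.Perm Ω)) (k + 1) =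
      ((MulAction.toPermHom G Ω).range : Set (Equiv.Perm Ω)) ∧
    kClosure ((MulAction.toPermHom G Ω).range : Set (Equiv.Perm Ω)) k ≠
      ((MulAction.toPermHom G Ω).range : Set (Equiv.Perm Ω)) := by
  set R := (toPermHom G Ω).range
  rw [← Nat.card_eq_fintype_card] at hk2
  have : IsPreprimitive G Ω :=
    { exists_smul_eq := htrans
      isTrivialBlock_of_isBlock := fun hB => hprim _ (isBlock_iff_smul_eq_or_disjoint.mp hB) }
  have : IsMultiplyPretransitive G Ω k :=
    isMultiplyPretransitive_iff.mpr fun x y => (hktrans x y).imp fun _ => Function.Embedding.ext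
  have : IsMultiplyPretransitive (alternatingGroup Ω) Ω (k + 1) :=
    alternatingGroup.isMultiplyPretransitive_of_le (by omega)
  set H := kClosureSubgroup R (k + 1)
  have hAlt : ¬ alternatingGroup Ω ≤ H := fun hAltH => hnotktrans fun x y => by
    have := isMultiplyPretransitive_of_subset_kClosure (G := G) hAltH
    obtain ⟨g, hg⟩ := exists_smul_eq G x y
    exact ⟨g, fun i => congrArg (· i) hg⟩
  have hHAlt : H ⊓ alternatingGroup Ω = R :=
    (hmax _ (le_inf (le_kClosureSubgroup R _) hle) inf_le_right).resolve_right
      fun h => hAlt (h ▸ inf_le_left)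
  have hHR : H ≤ R := calc
    H ≤ normalizer ((H ⊓ alternatingGroup Ω : Subgroup (Perm Ω)) : Set (Perm Ω)) :=
      (le_inf le_normalizer le_normalizer_of_normal).trans inf_normalizer_le_normalizer_inf
    _ = normalizer (R : Set (Perm Ω)) := by rw [hHAlt]
    _ ≤ R := IsPreprimitive.normalizer_range_toPermHom_le hnonab hinner
  have : Nontrivial Ω := Finite.one_lt_card_iff_nontrivial.mp (by omega)
  refine ⟨le_antisymm hHR (le_kClosureSubgroup R _), ?_⟩
  rw [kClosure_range_toPermHom_eq_univ (by omega)]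
  exact (coe_ne_univ_of_le_alternatingGroup hle).symm

/-- Let `G` be a finite nonabelian simple group acting faithfully and primitively on a
finite set `Ω`, such that every automorphism of `G` is inner and the induced group `G^Ω` is
a maximal subgroup of `Alt(Ω)`. If, for some `1 ≤ k < |Ω| - 2`, the action is `k`-transitive
but not `(k+1)`-transitive, then `G^Ω` equals its own `(k+1)`-closure but not its own
`k`-closure. -/
theorem kClosure_of_maximal_in_alternating {G : Type*} [Group G] [Finite G]
    (hnonab : ∃ a b : G, a * b ≠ b * a) (hsimple : IsSimpleGroup G)
    {Ω : Type*} [Fintype Ω] [DecidableEq Ω] [MulAction G Ω] [FaithfulSMul G Ω]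
    (htrans : ∀ x y : Ω, ∃ g : G, g • x = y)
    (hprim : ∀ B : Set Ω, (∀ g : G, g • B = B ∨ Disjoint (g • B) B) →
      B.Subsingleton ∨ B = Set.univ)
    (hinner : ∀ f : G ≃* G, ∃ g : G, ∀ x : G, f x = g * x * g⁻¹)
    (hle : (MulAction.toPermHom G Ω).range ≤ alternatingGroup Ω)
    (hne : (MulAction.toPermHom G Ω).range ≠ alternatingGroup Ω)
    (hmax : ∀ H : Subgroup (Equiv.Perm Ω), (MulAction.toPermHom G Ω).range ≤ H →
      H ≤ alternatingGroup Ω →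
      H = (MulAction.toPermHom G Ω).range ∨ H = alternatingGroup Ω)
    (k : ℕ) (hk1 : 1 ≤ k) (hk2 : k < Fintype.card Ω - 2)
    (hktrans : ∀ x y : Fin k ↪ Ω, ∃ g : G, ∀ i, g • x i = y i)
    (hnotktrans : ¬ ∀ x y : Fin (k + 1) ↪ Ω, ∃ g : G, ∀ i, g • x i = y i) :
    kClosure ((MulAction.toPermHom G Ω).range : Set (Equiv.Perm Ω)) (k + 1) =
      ((MulAction.toPermHom G Ω).range : Set (Equiv.Perm Ω)) ∧
    kClosure ((MulAction.toPermHom G Ω).range : Set (Equiv.Perm Ω)) k ≠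
      ((MulAction.toPermHom G Ω).range : Set (Equiv.Perm Ω)) :=
  kClosure_of_maximal_in_alternating_general hnonab htrans hprim hinner hle hmax k hk2 hktrans
    hnotktrans
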